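/- arXiv:2009.14121 — 5 statements merged into one kernel-verified Lean document; each statement's English description precedes it below -/
import Mathlib

section
/- Let F : ℕ → ℂ be not identically zero, and set F' := F ∗ μ. There exists a completely multiplicative function G : ℕ → ℂ such that R_G(a) converges with R_G(a) = F(a) for every a ∈ ℕ, if and only if F(1) ≠ 0, the function q ↦ F'(q)/F(1) is completely multiplicative, and the series Σ_{q=1}^∞ (F'(q)/q)·μ(q) converges to F(1)². In that case such G is unique and is given by G(q) = F'(q)/(q·F(1)) for all q ∈ ℕ. -/
open Filter Finset

noncomputable def mu (n : ℕ) : ℂ := ((ArithmeticFunction.moebius n : ℤ) : ℂ)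

/-- Ramanujan sum `c_q(a) = ∑_{d ∣ gcd(q,a)} d · μ(q/d)` (Kluyver's formula). -/
noncomputable def cR (q a : ℕ) : ℂ :=
  ∑ d ∈ (Nat.gcd q a).divisors, (d : ℂ) * mu (q / d)

/-- Partial sum of the Ramanujan series `R_G(a,x) = ∑_{q ≤ x} G(q) c_q(a)`. -/
noncomputable def RS (G : ℕ → ℂ) (a : ℕ) (x : ℝ) : ℂ :=
  ∑ q ∈ Finset.Icc 1 ⌊x⌋₊, G q * cR q a

/-- Partial sum of the coprime series `S_G(a,x) = ∑_{r ≤ x, (r,a)=1} G(r) μ(r)`. -/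
noncomputable def SS (G : ℕ → ℂ) (a : ℕ) (x : ℝ) : ℂ :=
  ∑ r ∈ (Finset.Icc 1 ⌊x⌋₊).filter fun r => Nat.gcd r a = 1, G r * mu r

/-- Partial sum of the Lucht series `L_G(d,x) = ∑_{K ≤ x} μ(K) G(dK)`. -/
noncomputable def LS (G : ℕ → ℂ) (d : ℕ) (x : ℝ) : ℂ :=
  ∑ K ∈ Finset.Icc 1 ⌊x⌋₊, mu K * G (d * K)

def RTendsto (G : ℕ → ℂ) (a : ℕ) (L : ℂ) : Prop :=
  Tendsto (fun x : ℝ => RS G a x) atTop (nhds L)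

def RConv (G : ℕ → ℂ) (a : ℕ) : Prop := ∃ L, RTendsto G a L

def STendsto (G : ℕ → ℂ) (a : ℕ) (L : ℂ) : Prop :=
  Tendsto (fun x : ℝ => SS G a x) atTop (nhds L)

def SConv (G : ℕ → ℂ) (a : ℕ) : Prop := ∃ L, STendsto G a L

def LTendsto (G : ℕ → ℂ) (d : ℕ) (L : ℂ) : Prop :=
  Tendsto (fun x : ℝ => LS G d x) atTop (nhds L)

def LConv (G : ℕ → ℂ) (d : ℕ) : Prop := ∃ L, LTendsto G d L

/-- `G` is multiplicative: `G(ab) = G(a)G(b)` for coprime positive `a, b`. -/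
def IsMult (G : ℕ → ℂ) : Prop :=
  ∀ a b : ℕ, 0 < a → 0 < b → Nat.Coprime a b → G (a * b) = G a * G b

/-- `G` is completely multiplicative. -/
def IsCM (G : ℕ → ℂ) : Prop :=
  ∀ a b : ℕ, 0 < a → 0 < b → G (a * b) = G a * G b

/-- The completely multiplicative index `w_{p,G}`: the largest `w ∈ ℕ` with
`G(p^k) = G(p)^k` for all `1 ≤ k ≤ w`, and `⊤` if this holds for all `k`. -/
noncomputable def cmIndex (G : ℕ → ℂ) (p : ℕ) : ℕ∞ :=
  ⨆ w ∈ {n : ℕ | ∀ k : ℕ, 1 ≤ k → k ≤ n → G (p ^ k) = G p ^ k}, (w : ℕ∞)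

/-- The transparency index `v_{p,G}`: least `K ≥ 0` with `G(p^{K+1}) ≠ 1`, or `⊤`. -/
noncomputable def trIdx (G : ℕ → ℂ) (p : ℕ) : ℕ∞ :=
  ⨅ K ∈ {K : ℕ | G (p ^ (K + 1)) ≠ 1}, (K : ℕ∞)

/-- A prime `p` is bad for `G` iff `1 ≤ |G(p)| ≤ p`. -/
def IsBad (G : ℕ → ℂ) (p : ℕ) : Prop :=
  1 ≤ ‖G p‖ ∧ ‖G p‖ ≤ p

def IsHyperbad (G : ℕ → ℂ) (p : ℕ) : Prop :=
  p.Prime ∧ IsBad G p ∧ cmIndex G p = ⊤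

def IsSimplyBad (G : ℕ → ℂ) (p : ℕ) : Prop :=
  p.Prime ∧ IsBad G p ∧ cmIndex G p ≠ ⊤

def IsSimplyTransparent (G : ℕ → ℂ) (p : ℕ) : Prop :=
  p.Prime ∧ G p = 1 ∧ cmIndex G p ≠ ⊤

/-- The Ramanujan conductor `N(G) = ∏_{p simply bad} p^{w_{p,G}}`. -/
noncomputable def ramCond (G : ℕ → ℂ) : ℕ :=
  ∏ᶠ p ∈ {p : ℕ | IsSimplyBad G p}, p ^ (cmIndex G p).toNat

/-- The transparency conductor `N_T(G) = ∏_{p simply transparent} p^{v_{p,G}}`. -/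
noncomputable def transpCond (G : ℕ → ℂ) : ℕ :=
  ∏ᶠ p ∈ {p : ℕ | IsSimplyTransparent G p}, p ^ (trIdx G p).toNat

/-- The squarefree radical of `n`. -/
def rad (n : ℕ) : ℕ := ∏ p ∈ n.primeFactors, p

/-- Euler–Ramanujan factor `E_G(a) = ∑_{d ∣ a·rad a} G(d) c_d(a)`. -/
noncomputable def EG (G : ℕ → ℂ) (a : ℕ) : ℂ := ∑ d ∈ (a * rad a).divisors, G d * cR d a

/-- `C_G(a) = ∑_{d ∣ a} G(d) μ(d)`. -/
noncomputable def CGsum (G : ℕ → ℂ) (a : ℕ) : ℂ := ∑ d ∈ a.divisors, G d * mu d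

/-- `D_G(a) = ∑_{d ∣ a} G(d) d`. -/
noncomputable def DGsum (G : ℕ → ℂ) (a : ℕ) : ℂ := ∑ d ∈ a.divisors, G d * (d : ℂ)

/-- `U_G(a) = ∑_{d ∣ a} μ(d) G(da)`. -/
noncomputable def UGsum (G : ℕ → ℂ) (a : ℕ) : ℂ := ∑ d ∈ a.divisors, mu d * G (d * a)

/-- Eratosthenes transform `F' = F ∗ μ`. -/
noncomputable def eratos (F : ℕ → ℂ) (n : ℕ) : ℂ := ∑ d ∈ n.divisors, F d * mu (n / d)

/-- The canonical Ramanujan coefficient of `F`: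
`G_F(q) = ∏_{p ∣ q} (1 - ∑_{K=0}^{v_p(q)-1} F'(p^K)/p^K)`. -/
noncomputable def canonCoeff (F : ℕ → ℂ) (q : ℕ) : ℂ :=
  ∏ p ∈ q.primeFactors,
    (1 - ∑ K ∈ Finset.range (q.factorization p), eratos F (p ^ K) / ((p : ℂ) ^ K))

/-- The opacity core `H_G(q) = G(q·N_T(G))·μ(q)²`. -/
noncomputable def opacityCore (G : ℕ → ℂ) (q : ℕ) : ℂ :=
  G (q * transpCond G) * mu q ^ 2

/-!
For completely multiplicative `G`, Kluyver's formula for `c_q(a)` and the substitution `q = d m`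
give `R_G(a, x) = ∑_{d ∣ a} d G(d) R_G(1, x / d)`, where `R_G(1, x) = ∑_{m ≤ x} G(m) μ(m)`.
So once `R_G(1) = F(1)`, every `R_G(a)` converges to `F(1) ∑_{d ∣ a} d G(d)`, and `R_G(a) = F(a)`
for all `a` amounts, by Möbius inversion, to `F'(q) = q G(q) F(1)`. Under this relation the series
`∑ F'(q) μ(q) / q` is `F(1) R_G(1)`, which yields both directions and the uniqueness of `G`.
-/

namespace Nat

theorem divisors_gcd_eq_filter {q a : ℕ} (ha : a ≠ 0) :
    (q.gcd a).divisors = {d ∈ a.divisors | d ∣ q} := by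
  ext d
  simp [Nat.dvd_gcd_iff, ha, and_comm]

theorem sum_Icc_filter_dvd {M : Type*} [AddCommMonoid M] (f : ℕ → M) {d : ℕ} (hd : 0 < d)
    (n : ℕ) : ∑ q ∈ Icc 1 n with d ∣ q, f q = ∑ m ∈ Icc 1 (n / d), f (d * m) := by
  symm
  refine Finset.sum_nbij' (d * ·) (· / d) ?_ ?_ ?_ ?_ fun _ _ => rfl
  · intro m hm
    simp only [Finset.mem_filter, Finset.mem_Icc] at hm ⊢
    refine ⟨⟨Nat.mul_pos hd hm.1, ?_⟩, dvd_mul_right d m⟩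
    rw [mul_comm]
    exact (Nat.le_div_iff_mul_le hd).1 hm.2
  · intro q hq
    simp only [Finset.mem_filter, Finset.mem_Icc] at hq ⊢
    exact ⟨(Nat.one_le_div_iff hd).2 (Nat.le_of_dvd (by omega) hq.2),
      Nat.div_le_div_right hq.1.2⟩
  · intro m _
    exact Nat.mul_div_cancel_left m hd
  · intro q hq
    exact Nat.mul_div_cancel' (mem_filter.1 hq).2

end Nat

theorem IsCM.congr {f g : ℕ → ℂ} (hf : IsCM f) (h : ∀ n, 0 < n → f n = g n) : IsCM g :=
  fun a b ha hb => by rw [← h _ (Nat.mul_pos ha hb), ← h a ha, ← h b hb, hf a b ha hb]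

theorem IsCM.mul {f g : ℕ → ℂ} (hf : IsCM f) (hg : IsCM g) : IsCM (fun n => f n * g n) :=
  fun a b ha hb => by simp only [hf a b ha hb, hg a b ha hb]; ring

theorem IsCM.div {f g : ℕ → ℂ} (hf : IsCM f) (hg : IsCM g) : IsCM (fun n => f n / g n) :=
  fun a b ha hb => by simp only [hf a b ha hb, hg a b ha hb, mul_div_mul_comm]

theorem isCM_natCast : IsCM (fun n => (n : ℂ)) :=
  fun a b _ _ => Nat.cast_mul a b

theorem cR_one (q : ℕ) : cR q 1 = mu q := by
  simp [cR]

theorem RS_one (G : ℕ → ℂ) (x : ℝ) : RS G 1 x = ∑ m ∈ Icc 1 ⌊x⌋₊, G m * mu m := by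
  simp only [RS, cR_one]

section CompletelyMultiplicative

variable {G : ℕ → ℂ}

theorem RS_eq_sum_divisors_mul_RS_one (hG : IsCM G) {a : ℕ} (ha : 0 < a) (x : ℝ) :
    RS G a x = ∑ d ∈ a.divisors, d * G d * RS G 1 (x / d) := by
  calc RS G a x = ∑ q ∈ Icc 1 ⌊x⌋₊, ∑ d ∈ a.divisors with d ∣ q, d * (G q * mu (q / d)) := by
        simp only [RS, cR, Nat.divisors_gcd_eq_filter ha.ne', mul_sum]
        refine sum_congr rfl fun _ _ => sum_congr rfl fun _ _ => by ring
    _ = ∑ d ∈ a.divisors, ∑ q ∈ Icc 1 ⌊x⌋₊ with d ∣ q, d * (G q * mu (q / d)) :=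
        sum_comm' fun _ _ => by simp only [mem_filter]; tauto
    _ = ∑ d ∈ a.divisors, ∑ m ∈ Icc 1 (⌊x⌋₊ / d), d * (G (d * m) * mu m) := by
        refine sum_congr rfl fun d hd => ?_
        have hd0 := Nat.pos_of_mem_divisors hd
        rw [Nat.sum_Icc_filter_dvd _ hd0]
        simp only [Nat.mul_div_cancel_left _ hd0]
    _ = ∑ d ∈ a.divisors, d * G d * RS G 1 (x / d) := by
        refine sum_congr rfl fun d hd => ?_
        rw [RS_one, Nat.floor_div_natCast, mul_sum]
        refine sum_congr rfl fun m hm => ?_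
        rw [hG d m (Nat.pos_of_mem_divisors hd) (mem_Icc.1 hm).1]
        ring

theorem RTendsto.of_isCM (hG : IsCM G) {S : ℂ} (h : RTendsto G 1 S) {a : ℕ} (ha : 0 < a) :
    RTendsto G a (∑ d ∈ a.divisors, d * G d * S) := by
  show Tendsto (fun x => RS G a x) atTop _
  simp_rw [RS_eq_sum_divisors_mul_RS_one hG ha]
  refine tendsto_finsetSum _ fun d hd => (h.comp ?_).const_mul _
  exact tendsto_id.atTop_div_const (by exact_mod_cast Nat.pos_of_mem_divisors hd)

end CompletelyMultiplicative

theorem sum_divisors_eq_iff_eratos_eq {F f : ℕ → ℂ} :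
    (∀ n, 0 < n → ∑ d ∈ n.divisors, f d = F n) ↔ ∀ n, 0 < n → eratos F n = f n := by
  rw [ArithmeticFunction.sum_eq_iff_sum_mul_moebius_eq]
  refine forall₂_congr fun n _ => ?_
  rw [Nat.sum_divisorsAntidiagonal' (f := fun i j => (ArithmeticFunction.moebius i : ℂ) * F j),
    eratos]
  simp only [mu, mul_comm]

theorem ne_zero_of_eratos_eq_mul {F G : ℕ → ℂ} (hF : ∃ a, 0 < a ∧ F a ≠ 0)
    (h : ∀ q, 0 < q → eratos F q = q * G q * F 1) : F 1 ≠ 0 := by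
  obtain ⟨a, ha, hFa⟩ := hF
  intro h0
  rw [← sum_divisors_eq_iff_eratos_eq.2 h a ha] at hFa
  simp [h0] at hFa

theorem forall_RTendsto_iff {F G : ℕ → ℂ} (hG : IsCM G) :
    (∀ a, 0 < a → RTendsto G a (F a)) ↔
      RTendsto G 1 (F 1) ∧ ∀ q, 0 < q → eratos F q = q * G q * F 1 := by
  rw [← sum_divisors_eq_iff_eratos_eq]
  constructor
  · intro h
    exact ⟨h 1 one_pos, fun a ha => tendsto_nhds_unique (h 1 one_pos |>.of_isCM hG ha) (h a ha)⟩
  · rintro ⟨h1, hF⟩ a ha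
    rw [← hF a ha]
    exact h1.of_isCM hG ha

theorem sum_eratos_div_mul_mu_eq {F G : ℕ → ℂ} (h : ∀ q, 0 < q → eratos F q = q * G q * F 1)
    (x : ℝ) : ∑ q ∈ Icc 1 ⌊x⌋₊, eratos F q / q * mu q = F 1 * RS G 1 x := by
  rw [RS_one, mul_sum]
  refine sum_congr rfl fun q hq => ?_
  have hq0 : 0 < q := (mem_Icc.1 hq).1
  have hq0' : (q : ℂ) ≠ 0 := Nat.cast_ne_zero.2 hq0.ne'
  rw [h q hq0]
  field_simp

/-- Completely multiplicative Ramanujan clouds (Theorem 4.2). -/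
theorem stmt_9 (F : ℕ → ℂ) (hF : ∃ a : ℕ, 0 < a ∧ F a ≠ 0) :
    ((∃ G : ℕ → ℂ, IsCM G ∧ ∀ a : ℕ, 0 < a → RTendsto G a (F a)) ↔
      (F 1 ≠ 0 ∧ IsCM (fun q => eratos F q / F 1) ∧
        Tendsto (fun x : ℝ => ∑ q ∈ Finset.Icc 1 ⌊x⌋₊, (eratos F q / q) * mu q)
          atTop (nhds (F 1 ^ 2)))) ∧
    (∀ G : ℕ → ℂ, IsCM G → (∀ a : ℕ, 0 < a → RTendsto G a (F a)) →
      ∀ q : ℕ, 0 < q → G q = eratos F q / (q * F 1)) := by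
  refine ⟨⟨fun ⟨G, hG, hR⟩ => ?_, fun ⟨hF1, hCM, hsum⟩ => ?_⟩, fun G hG hR q hq => ?_⟩
  · obtain ⟨h1, hrel⟩ := (forall_RTendsto_iff hG).1 hR
    have hF1 := ne_zero_of_eratos_eq_mul hF hrel
    refine ⟨hF1, (isCM_natCast.mul hG).congr fun q hq => ?_, ?_⟩
    · rw [hrel q hq, mul_div_cancel_right₀ _ hF1]
    · simp_rw [sum_eratos_div_mul_mu_eq hrel, sq]
      exact h1.const_mul _
  · set G : ℕ → ℂ := fun q => eratos F q / F 1 / q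
    have hrel : ∀ q, 0 < q → eratos F q = q * G q * F 1 := fun q hq => by
      have : (q : ℂ) ≠ 0 := Nat.cast_ne_zero.2 hq.ne'
      simp only [G]
      field_simp
    refine ⟨G, hCM.div isCM_natCast, (forall_RTendsto_iff (hCM.div isCM_natCast)).2 ⟨?_, hrel⟩⟩
    have := hsum.const_mul (F 1)⁻¹
    simp_rw [sum_eratos_div_mul_mu_eq hrel, inv_mul_cancel_left₀ hF1] at this
    rwa [sq, inv_mul_cancel_left₀ hF1] at this
  · obtain ⟨-, hrel⟩ := (forall_RTendsto_iff hG).1 hR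
    have : (q : ℂ) ≠ 0 := Nat.cast_ne_zero.2 hq.ne'
    rw [hrel q hq]
    field_simp [ne_zero_of_eratos_eq_mul hF hrel]
end

section
/- Let G, M : ℕ → ℂ be multiplicative, let G_M be the canonical Ramanujan coefficient of M, and let p be a prime with G(p) ≠ 1 such that G(p^v) = G(p) + (1 − G(p))·G_M(p^v) for every v ≥ 1. Then w_{p,G} = ∞ if and only if both w_{p,M∗μ} = ∞ and G(p) = (M(p) − 1)/p. -/
open Filter Finset

/-!
Since `G_M(p^v) = 1 - ∑_{K<v} M'(p^K)/p^K`, the hypothesis telescopes to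
`G(p^(k+1)) - G(p^k) = -(1 - G(p)) M'(p^k)/p^k` for `k ≥ 1`, and at `v = 1` it forces `M(1) = 1`.
As `G(p) ≠ 1`, the powers `G(p)^k` satisfy this recursion exactly when `M'(p^k) = (G(p) p)^k` for
all `k ≥ 1`, i.e. when `M'` is completely multiplicative along `p` with `M'(p) = M(p) - 1 = G(p) p`.
-/

theorem cmIndex_eq_top_iff (G : ℕ → ℂ) (p : ℕ) :
    cmIndex G p = ⊤ ↔ ∀ k : ℕ, 1 ≤ k → G (p ^ k) = G p ^ k := by
  rw [cmIndex, iSup₂_eq_top]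
  constructor
  · intro h k hk
    obtain ⟨w, hw, hkw⟩ := h k (ENat.natCast_lt_top k)
    exact hw k hk (by exact_mod_cast hkw.le)
  · intro h b hb
    lift b to ℕ using hb.ne
    exact ⟨b + 1, fun k hk _ => h k hk, by exact_mod_cast b.lt_succ_self⟩

theorem forall_apply_pow_eq_pow_iff (f : ℕ → ℂ) (p : ℕ) (c : ℂ) :
    (∀ k : ℕ, 1 ≤ k → f (p ^ k) = c ^ k) ↔
      (∀ k : ℕ, 1 ≤ k → f (p ^ k) = f p ^ k) ∧ f p = c := by
  constructor
  · intro h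
    have hfp : f p = c := by simpa using h 1 le_rfl
    exact ⟨hfp ▸ h, hfp⟩
  · rintro ⟨h, rfl⟩
    exact h

theorem eratos_one (M : ℕ → ℂ) : eratos M 1 = M 1 := by
  simp [eratos, mu]

theorem eratos_prime (M : ℕ → ℂ) {p : ℕ} (hp : p.Prime) : eratos M p = M p - M 1 := by
  rw [eratos, hp.divisors, sum_pair hp.one_lt.ne]
  simp [mu, Nat.div_self hp.pos, ArithmeticFunction.moebius_apply_prime hp]
  ring

theorem canonCoeff_prime_pow (M : ℕ → ℂ) {p : ℕ} (hp : p.Prime) (v : ℕ) :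
    canonCoeff M (p ^ v) = 1 - ∑ K ∈ range v, eratos M (p ^ K) / (p : ℂ) ^ K := by
  rcases v.eq_zero_or_pos with rfl | hv
  · simp [canonCoeff]
  · rw [canonCoeff, Nat.primeFactors_pow _ hv.ne', hp.primeFactors, prod_singleton,
      hp.factorization_pow, Finsupp.single_eq_same]

theorem canonCoeff_prime_pow_succ (M : ℕ → ℂ) {p : ℕ} (hp : p.Prime) (v : ℕ) :
    canonCoeff M (p ^ (v + 1)) = canonCoeff M (p ^ v) - eratos M (p ^ v) / (p : ℂ) ^ v := by
  rw [canonCoeff_prime_pow M hp, canonCoeff_prime_pow M hp, sum_range_succ]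
  ring

theorem forall_apply_pow_eq_pow_iff_of_step (G E : ℕ → ℂ) (p : ℕ) (hp : (p : ℂ) ≠ 0)
    (hGp : G p ≠ 1)
    (hstep : ∀ k : ℕ, 1 ≤ k → G (p ^ (k + 1)) = G (p ^ k) - (1 - G p) * (E (p ^ k) / p ^ k)) :
    (∀ k : ℕ, 1 ≤ k → G (p ^ k) = G p ^ k) ↔ ∀ k : ℕ, 1 ≤ k → E (p ^ k) = (G p * p) ^ k := by
  have hGp' : 1 - G p ≠ 0 := sub_ne_zero.mpr hGp.symm
  constructor
  · intro hG k hk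
    have hincr : (1 - G p) * (E (p ^ k) / p ^ k) = (1 - G p) * G p ^ k := by
      linear_combination hstep k hk - hG (k + 1) (by omega) + hG k hk
    rw [mul_pow, ← div_eq_iff (pow_ne_zero k hp)]
    exact mul_left_cancel₀ hGp' hincr
  · intro hE k hk
    induction k, hk using Nat.le_induction with
    | base => rw [pow_one, pow_one]
    | succ k hk ih =>
      rw [hstep k hk, hE k hk, ih, mul_pow, mul_div_cancel_right₀ _ (pow_ne_zero k hp)]
      ring

theorem stmt_11_general (G M : ℕ → ℂ)
    (p : ℕ) (hp : p.Prime) (hGp : G p ≠ 1)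
    (hrec : ∀ v : ℕ, 1 ≤ v → G (p ^ v) = G p + (1 - G p) * canonCoeff M (p ^ v)) :
    cmIndex G p = ⊤ ↔ (cmIndex (eratos M) p = ⊤ ∧ G p = (M p - 1) / p) := by
  have hp0 : (p : ℂ) ≠ 0 := Nat.cast_ne_zero.mpr hp.ne_zero
  have hM1 : M 1 = 1 := by
    have h := hrec 1 le_rfl
    rw [canonCoeff_prime_pow M hp, sum_range_one, pow_zero, pow_zero, eratos_one, div_one,
      pow_one] at h
    have h' : (1 - G p) * (1 - M 1) = 0 := by linear_combination -h
    linear_combination -(mul_eq_zero.mp h').resolve_left (sub_ne_zero.mpr hGp.symm)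
  have hstep : ∀ k : ℕ, 1 ≤ k →
      G (p ^ (k + 1)) = G (p ^ k) - (1 - G p) * (eratos M (p ^ k) / p ^ k) := by
    intro k hk
    rw [hrec (k + 1) (by omega), hrec k hk, canonCoeff_prime_pow_succ M hp]
    ring
  rw [cmIndex_eq_top_iff, cmIndex_eq_top_iff, forall_apply_pow_eq_pow_iff_of_step G _ p hp0 hGp
    hstep, forall_apply_pow_eq_pow_iff, eratos_prime M hp, hM1, eq_div_iff hp0, eq_comm]

/-- Characterization of complete multiplicativity along `p` (Lemma 9.7). -/
theorem stmt_11 (G M : ℕ → ℂ) (hG : IsMult G) (hM : IsMult M)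
    (p : ℕ) (hp : p.Prime) (hGp : G p ≠ 1)
    (hrec : ∀ v : ℕ, 1 ≤ v → G (p ^ v) = G p + (1 - G p) * canonCoeff M (p ^ v)) :
    cmIndex G p = ⊤ ↔ (cmIndex (eratos M) p = ⊤ ∧ G p = (M p - 1) / p) :=
  stmt_11_general G M p hp hGp hrec
end

section
/- Let G : ℕ → ℂ be multiplicative and let b, c ∈ ℕ with gcd(b,c) = 1. Then S_G(b,x) = Σ_{d ∣ c} G(d)·μ(d)·S_G(bc, x/d) for every real x ≥ 0. Consequently, if S_G(bc) converges, then S_G(b) converges and S_G(b) = C_G(c)·S_G(bc) = ( ∏_{p ∣ c} (1 − G(p)) ) · S_G(bc). -/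
open Filter Finset

/-! Every squarefree `r` coprime to `b` factors uniquely as `r = d m` with `d = gcd(r, c)` dividing
`c` and `m` coprime to `bc`. Since `r ↦ G(r) μ(r)` is multiplicative and vanishes off the squarefree
numbers, this splits `S_G(b, x)` as `∑_{d ∣ c} G(d) μ(d) S_G(bc, x / d)`, and letting `x → ∞` gives
`S_G(b) = C_G(c) S_G(bc)`. As the Dirichlet convolution of `μ G` with `1`, `C_G` is multiplicative,
and it equals `1 - G(p)` at every prime power `p ^ k` with `k ≥ 1`. If `G(1) ≠ 1`, then `G`
vanishes on all positive integers and so does `S_G(bc)`. -/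

open ArithmeticFunction
open scoped ArithmeticFunction.Moebius ArithmeticFunction.zeta

theorem mu_mul_of_coprime {m n : ℕ} (h : m.Coprime n) : mu (m * n) = mu m * mu n := by
  simp [mu, isMultiplicative_moebius.map_mul_of_coprime h]

theorem mu_eq_zero_of_not_squarefree {n : ℕ} (h : ¬Squarefree n) : mu n = 0 := by
  simp [mu, moebius_eq_zero_of_not_squarefree h]

theorem ArithmeticFunction.IsMultiplicative.prodPrimeFactors_one_sub {R : Type*} [CommRing R]
    {f : ArithmeticFunction R} (hf : f.IsMultiplicative) {n : ℕ} (hn : n ≠ 0) :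
    ∏ p ∈ n.primeFactors, (1 - f p) = ∑ d ∈ n.divisors, (μ d : R) * f d := by
  set F := (μ : ArithmeticFunction R).pmul f * (ζ : ArithmeticFunction R)
  have hF : F.IsMultiplicative :=
    (isMultiplicative_moebius.intCast.pmul hf).mul isMultiplicative_zeta.natCast
  have key : ArithmeticFunction.prodPrimeFactors (fun p => 1 - f p) = F := by
    refine (eq_iff_eq_on_prime_powers _ (IsMultiplicative.prodPrimeFactors _) _ hF).2
      fun p k hp => ?_
    rcases k with _ | k
    · simp [hF.map_one, (IsMultiplicative.prodPrimeFactors _).map_one]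
    rw [coe_mul_zeta_apply, Nat.sum_divisors_prime_pow hp,
      prodPrimeFactors_apply (pow_ne_zero _ hp.ne_zero),
      Nat.primeFactors_prime_pow k.succ_ne_zero hp, prod_singleton,
      sum_range_succ', sum_range_succ', sum_eq_zero]
    · simp only [pmul_apply, intCoe_apply, zero_add, pow_zero, pow_one, moebius_apply_one,
        moebius_apply_prime hp, hf.map_one]
      push_cast
      ring
    · intro i _
      simp [pmul_apply, moebius_apply_prime_pow hp]
  rw [← prodPrimeFactors_apply hn, key, coe_mul_zeta_apply]
  simp only [pmul_apply, intCoe_apply]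

theorem toArithmeticFunction_apply {R : Type*} [Zero R] (f : ℕ → R) {n : ℕ} (hn : n ≠ 0) :
    toArithmeticFunction f n = f n :=
  if_neg hn

namespace IsMult

variable {G : ℕ → ℂ}

theorem map_one_eq_one_or (hG : IsMult G) : G 1 = 1 ∨ ∀ n, 0 < n → G n = 0 := by
  have h11 : G 1 * (G 1 - 1) = 0 := by
    linear_combination (hG 1 1 one_pos one_pos (Nat.coprime_one_left 1)).symm
  rcases mul_eq_zero.1 h11 with h0 | h1
  · refine Or.inr fun n hn => ?_
    rw [← mul_one n, hG n 1 hn one_pos (Nat.coprime_one_right n), h0, mul_zero]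
  · exact Or.inl (sub_eq_zero.1 h1)

theorem isMultiplicative_toArithmeticFunction (hG : IsMult G) (h1 : G 1 = 1) :
    (toArithmeticFunction G).IsMultiplicative := by
  rw [IsMultiplicative.iff_ne_zero]
  refine ⟨by rw [toArithmeticFunction_apply G one_ne_zero, h1], fun {m n} hm hn hmn => ?_⟩
  rw [toArithmeticFunction_apply G (mul_ne_zero hm hn), toArithmeticFunction_apply G hm,
    toArithmeticFunction_apply G hn]
  exact hG m n (Nat.pos_of_ne_zero hm) (Nat.pos_of_ne_zero hn) hmn

theorem CGsum_eq_prod (hG : IsMult G) (h1 : G 1 = 1) {c : ℕ} (hc : c ≠ 0) :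
    CGsum G c = ∏ p ∈ c.primeFactors, (1 - G p) :=
  calc CGsum G c = ∑ d ∈ c.divisors, (μ d : ℂ) * toArithmeticFunction G d :=
        sum_congr rfl fun d hd => by
          rw [toArithmeticFunction_apply G (Nat.pos_of_mem_divisors hd).ne', mu, mul_comm]
    _ = ∏ p ∈ c.primeFactors, (1 - toArithmeticFunction G p) :=
        ((hG.isMultiplicative_toArithmeticFunction h1).prodPrimeFactors_one_sub hc).symm
    _ = ∏ p ∈ c.primeFactors, (1 - G p) :=
        prod_congr rfl fun p hp => by
          rw [toArithmeticFunction_apply G (Nat.prime_of_mem_primeFactors hp).ne_zero]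

end IsMult

section CoprimeSplittings

variable {b c N : ℕ}

def coprimeSplittings (b c N : ℕ) : Finset (Σ _ : ℕ, ℕ) :=
  c.divisors.sigma fun d => (Icc 1 (N / d)).filter fun m => m.gcd (b * c) = 1

theorem mem_coprimeSplittings (hc : c ≠ 0) {q : Σ _ : ℕ, ℕ} :
    q ∈ coprimeSplittings b c N ↔
      q.1 ∣ c ∧ 1 ≤ q.2 ∧ q.2 * q.1 ≤ N ∧ q.2.Coprime b ∧ q.2.Coprime c := by
  simp only [coprimeSplittings, mem_sigma, Nat.mem_divisors, mem_filter, mem_Icc,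
    ← Nat.coprime_iff_gcd_eq_one, Nat.coprime_mul_iff_right]
  constructor
  · rintro ⟨⟨hd, -⟩, ⟨hm, hmN⟩, hmb, hmc⟩
    exact ⟨hd, hm, (Nat.le_div_iff_mul_le (Nat.pos_of_dvd_of_pos hd hc.bot_lt)).1 hmN, hmb, hmc⟩
  · rintro ⟨hd, hm, hmN, hmb, hmc⟩
    exact ⟨⟨hd, hc⟩, ⟨hm, (Nat.le_div_iff_mul_le (Nat.pos_of_dvd_of_pos hd hc.bot_lt)).2 hmN⟩,
      hmb, hmc⟩

theorem injOn_mul_coprimeSplittings (hc : c ≠ 0) :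
    Set.InjOn (fun q : Σ _ : ℕ, ℕ => q.1 * q.2) (coprimeSplittings b c N) := by
  rintro ⟨d, m⟩ hq ⟨d', m'⟩ hq' (h : d * m = d' * m')
  obtain ⟨hd, -, -, -, hmc⟩ := (mem_coprimeSplittings hc).1 hq
  obtain ⟨hd', -, -, -, hmc'⟩ := (mem_coprimeSplittings hc).1 hq'
  dsimp only at hd hmc hd' hmc'
  obtain rfl : d = d' :=
    calc d = (d * m).gcd c := by rw [hmc.gcd_mul_right_cancel, Nat.gcd_eq_left hd]
      _ = (d' * m').gcd c := by rw [h]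
      _ = d' := by rw [hmc'.gcd_mul_right_cancel, Nat.gcd_eq_left hd']
  obtain rfl : m = m' := Nat.eq_of_mul_eq_mul_left (Nat.pos_of_dvd_of_pos hd hc.bot_lt) h
  rfl

theorem sum_filter_coprime_eq_sum_coprimeSplittings {M : Type*} [AddCommMonoid M] {f : ℕ → M}
    (hf : ∀ r, ¬Squarefree r → f r = 0) (hc : c ≠ 0) (hbc : b.Coprime c) :
    ∑ r ∈ (Icc 1 N).filter (fun r => r.gcd b = 1), f r =
      ∑ q ∈ coprimeSplittings b c N, f (q.1 * q.2) := by
  rw [← sum_image (injOn_mul_coprimeSplittings hc)]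
  symm
  refine sum_subset (fun r hr => ?_) fun r hr hrS => hf r fun hsq => hrS ?_
  · obtain ⟨⟨d, m⟩, hq, rfl⟩ := mem_image.1 hr
    obtain ⟨hd, hm, hmN, hmb, -⟩ := (mem_coprimeSplittings hc).1 hq
    simp only [mem_filter, mem_Icc, ← Nat.coprime_iff_gcd_eq_one]
    exact ⟨⟨Nat.mul_pos (Nat.pos_of_dvd_of_pos hd hc.bot_lt) hm, mul_comm d m ▸ hmN⟩,
      (hbc.symm.coprime_dvd_left hd).mul_left hmb⟩
  · simp only [mem_filter, mem_Icc, ← Nat.coprime_iff_gcd_eq_one] at hr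
    obtain ⟨⟨hr, hrN⟩, hrb⟩ := hr
    have hgr := Nat.gcd_dvd_left r c
    refine mem_image.2 ⟨⟨r.gcd c, r / r.gcd c⟩, (mem_coprimeSplittings hc).2
      ⟨Nat.gcd_dvd_right r c, ?_, ?_, ?_, ?_⟩, Nat.mul_div_cancel' hgr⟩
    · exact Nat.div_pos (Nat.le_of_dvd hr hgr) (Nat.gcd_pos_of_pos_left c hr)
    · exact (Nat.div_mul_cancel hgr).symm ▸ hrN
    · exact hrb.coprime_dvd_left (Nat.div_dvd_of_dvd hgr)
    · exact Nat.coprime_div_gcd_of_squarefree hsq hc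

theorem sum_filter_coprime_eq_sum_divisors {G : ℕ → ℂ} (hG : IsMult G) (hc : c ≠ 0)
    (hbc : b.Coprime c) :
    ∑ r ∈ (Icc 1 N).filter (fun r => r.gcd b = 1), G r * mu r =
      ∑ d ∈ c.divisors, G d * mu d *
        ∑ m ∈ (Icc 1 (N / d)).filter (fun m => m.gcd (b * c) = 1), G m * mu m := by
  have hsplit : ∀ q ∈ coprimeSplittings b c N,
      G (q.1 * q.2) * mu (q.1 * q.2) = G q.1 * mu q.1 * (G q.2 * mu q.2) := by
    intro q hq
    obtain ⟨hd, hm, -, -, hmc⟩ := (mem_coprimeSplittings hc).1 hq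
    have hdm : q.1.Coprime q.2 := (hmc.coprime_dvd_right hd).symm
    rw [hG _ _ (Nat.pos_of_dvd_of_pos hd hc.bot_lt) hm hdm, mu_mul_of_coprime hdm]
    ring
  rw [sum_filter_coprime_eq_sum_coprimeSplittings
      (fun r hr => by rw [mu_eq_zero_of_not_squarefree hr, mul_zero]) hc hbc,
    sum_congr rfl hsplit, coprimeSplittings, sum_sigma]
  simp_rw [mul_sum]

end CoprimeSplittings

section CoprimeSeries

variable {G : ℕ → ℂ} {b c : ℕ}

theorem SS_eq_sum_divisors (hG : IsMult G) (hc : c ≠ 0) (hbc : b.Coprime c) (x : ℝ) :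
    SS G b x = ∑ d ∈ c.divisors, G d * mu d * SS G (b * c) (x / d) := by
  simp only [SS, Nat.floor_div_natCast]
  exact sum_filter_coprime_eq_sum_divisors hG hc hbc

theorem STendsto.of_mul_right (hG : IsMult G) (hc : c ≠ 0) (hbc : b.Coprime c) {L : ℂ}
    (hL : STendsto G (b * c) L) : STendsto G b (CGsum G c * L) := by
  have hsum : Tendsto (fun x : ℝ => ∑ d ∈ c.divisors, G d * mu d * SS G (b * c) (x / d)) atTop
      (nhds (∑ d ∈ c.divisors, G d * mu d * L)) :=
    tendsto_finsetSum _ fun d hd =>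
      (hL.comp (tendsto_id.atTop_div_const (mod_cast Nat.pos_of_mem_divisors hd))).const_mul _
  rw [STendsto, CGsum, sum_mul]
  simpa only [← SS_eq_sum_divisors hG hc hbc] using hsum

theorem STendsto.eq_zero_of_forall_pos (h : ∀ n, 0 < n → G n = 0) {L : ℂ}
    (hL : STendsto G b L) : L = 0 := by
  have hSS (x : ℝ) : SS G b x = 0 :=
    sum_eq_zero fun r hr => by rw [h r (mem_Icc.1 (mem_filter.1 hr).1).1, zero_mul]
  exact tendsto_nhds_unique hL (by simpa only [hSS] using tendsto_const_nhds)

end CoprimeSeries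

theorem stmt_12_general (G : ℕ → ℂ) (hG : IsMult G) (b c : ℕ) (hc : 0 < c)
    (hbc : Nat.Coprime b c) :
    (∀ x : ℝ, 0 ≤ x → SS G b x = ∑ d ∈ c.divisors, G d * mu d * SS G (b * c) (x / d)) ∧
    (∀ L : ℂ, STendsto G (b * c) L →
      STendsto G b (CGsum G c * L) ∧
      CGsum G c * L = (∏ p ∈ c.primeFactors, (1 - G p)) * L) := by
  refine ⟨fun x _ => SS_eq_sum_divisors hG hc.ne' hbc x,
    fun L hL => ⟨hL.of_mul_right hG hc.ne' hbc, ?_⟩⟩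
  rcases hG.map_one_eq_one_or with h1 | h0
  · rw [hG.CGsum_eq_prod h1 hc.ne']
  · simp [hL.eq_zero_of_forall_pos h0]

/-- The `S_G`-recursive formula (Corollary 3.2). -/
theorem stmt_12 (G : ℕ → ℂ) (hG : IsMult G) (b c : ℕ) (hb : 0 < b) (hc : 0 < c)
    (hbc : Nat.Coprime b c) :
    (∀ x : ℝ, 0 ≤ x → SS G b x = ∑ d ∈ c.divisors, G d * mu d * SS G (b * c) (x / d)) ∧
    (∀ L : ℂ, STendsto G (b * c) L →
      STendsto G b (CGsum G c * L) ∧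
      CGsum G c * L = (∏ p ∈ c.primeFactors, (1 - G p)) * L) :=
  stmt_12_general G hG b c hc hbc
end

section
/- Let G : ℕ → ℂ be any arithmetic function and a ∈ ℕ. Then for every real x ≥ 0: R_G(a,x) = Σ_{d ∣ a} d·L_G(d, x/d), and L_G(a, x/a) = (1/a)·Σ_{t ∣ a} R_G(t,x)·μ(a/t). Consequently: if L_G(d) converges for every d ∣ a, then R_G(a) converges and R_G(a) = Σ_{d ∣ a} d·L_G(d); if R_G(d) converges for every d ∣ a, then L_G(a) converges and L_G(a) = (1/a)·Σ_{t ∣ a} R_G(t)·μ(a/t). In particular, R_G(a) converges for every a ∈ ℕ if and only if L_G(a) converges for every a ∈ ℕ. -/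
open Filter Finset

/- Kluyver's formula gives `R_G(a,x) = ∑_{d ∣ a} d ∑_{q ≤ x, d ∣ q} μ(q/d) G(q)`; substituting
`q = dK` turns the inner sum into `L_G(d, x/d)`. The second identity is its Möbius inversion in `a`,
and the statements about convergence follow by passing to the limit in these finite identities. -/

theorem Nat.divisors_gcd_eq_filter_dvd (q : ℕ) {a : ℕ} (ha : a ≠ 0) :
    (Nat.gcd q a).divisors = a.divisors.filter (· ∣ q) := by
  ext d
  simp only [Nat.mem_divisors, Finset.mem_filter, Nat.dvd_gcd_iff, ne_eq,
    Nat.gcd_eq_zero_iff, ha, and_false, not_false_eq_true, and_true]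
  tauto

theorem Finset.sum_Icc_filter_dvd {M : Type*} [AddCommMonoid M] (f : ℕ → M) {d : ℕ} (hd : 0 < d)
    (N : ℕ) : ∑ q ∈ (Icc 1 N).filter (d ∣ ·), f q = ∑ K ∈ Icc 1 (N / d), f (d * K) := by
  rw [← sum_image fun K _ L _ h => Nat.eq_of_mul_eq_mul_left hd h]
  congr 1
  ext q
  simp only [mem_filter, mem_Icc, mem_image]
  constructor
  · rintro ⟨⟨hq1, hqN⟩, K, rfl⟩
    refine ⟨K, ⟨Nat.pos_of_mul_pos_left hq1, (Nat.le_div_iff_mul_le hd).2 ?_⟩, rfl⟩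
    rwa [mul_comm]
  · rintro ⟨K, ⟨hK1, hKN⟩, rfl⟩
    refine ⟨⟨Nat.mul_pos hd hK1, ?_⟩, dvd_mul_right d K⟩
    rw [mul_comm]
    exact (Nat.le_div_iff_mul_le hd).1 hKN

theorem cR_eq_sum_divisors_filter_dvd (q : ℕ) {a : ℕ} (ha : a ≠ 0) :
    cR q a = ∑ d ∈ a.divisors.filter (· ∣ q), (d : ℂ) * mu (q / d) := by
  rw [cR, Nat.divisors_gcd_eq_filter_dvd q ha]

theorem RS_eq_sum_divisors_mul_LS (G : ℕ → ℂ) {a : ℕ} (ha : a ≠ 0) (x : ℝ) :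
    RS G a x = ∑ d ∈ a.divisors, (d : ℂ) * LS G d (x / d) := by
  calc RS G a x
      = ∑ d ∈ a.divisors, ∑ q ∈ (Icc 1 ⌊x⌋₊).filter (d ∣ ·), (d : ℂ) * (mu (q / d) * G q) := by
        simp only [RS, cR_eq_sum_divisors_filter_dvd _ ha, mul_sum, sum_filter]
        rw [sum_comm]
        refine sum_congr rfl fun d _ => sum_congr rfl fun q _ => ?_
        split_ifs <;> ring
    _ = ∑ d ∈ a.divisors, (d : ℂ) * LS G d (x / d) := by
        refine sum_congr rfl fun d hd => ?_
        have hd0 := Nat.pos_of_mem_divisors hd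
        rw [sum_Icc_filter_dvd _ hd0, LS, Nat.floor_div_natCast, mul_sum]
        simp only [Nat.mul_div_cancel_left _ hd0]

theorem LS_div_eq_sum_divisors_RS_mul_mu (G : ℕ → ℂ) {a : ℕ} (ha : 0 < a) (x : ℝ) :
    LS G a (x / a) = (1 / (a : ℂ)) * ∑ t ∈ a.divisors, RS G t x * mu (a / t) := by
  have hinv := (ArithmeticFunction.sum_eq_iff_sum_mul_moebius_eq
    (f := fun d => (d : ℂ) * LS G d (x / d)) (g := fun n => RS G n x)).mp
    (fun n hn => (RS_eq_sum_divisors_mul_LS G hn.ne' x).symm) a ha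
  rw [Nat.sum_divisorsAntidiagonal' (f := fun d e =>
    ((ArithmeticFunction.moebius d : ℤ) : ℂ) * RS G e x)] at hinv
  have haC : (a : ℂ) ≠ 0 := Nat.cast_ne_zero.mpr ha.ne'
  simp only [mu, mul_comm (RS G _ x)]
  rw [hinv]
  field_simp

theorem RTendsto_sum_divisors_mul (G : ℕ → ℂ) {a : ℕ} (ha : 0 < a) (L : ℕ → ℂ)
    (hL : ∀ d ∈ a.divisors, LTendsto G d (L d)) :
    RTendsto G a (∑ d ∈ a.divisors, (d : ℂ) * L d) := by
  have hsum : Tendsto (fun x : ℝ => ∑ d ∈ a.divisors, (d : ℂ) * LS G d (x / d))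
      atTop (nhds (∑ d ∈ a.divisors, (d : ℂ) * L d)) := by
    refine tendsto_finsetSum _ fun d hd => ?_
    have hd0 : (0 : ℝ) < d := Nat.cast_pos.mpr (Nat.pos_of_mem_divisors hd)
    exact ((hL d hd).comp (tendsto_id.atTop_div_const hd0)).const_mul _
  exact hsum.congr fun x => (RS_eq_sum_divisors_mul_LS G ha.ne' x).symm

theorem LTendsto_sum_divisors_mul_mu (G : ℕ → ℂ) {a : ℕ} (ha : 0 < a) (R : ℕ → ℂ)
    (hR : ∀ t ∈ a.divisors, RTendsto G t (R t)) :
    LTendsto G a ((1 / (a : ℂ)) * ∑ t ∈ a.divisors, R t * mu (a / t)) := by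
  have haR : (0 : ℝ) < a := Nat.cast_pos.mpr ha
  have hsum : Tendsto (fun x : ℝ =>
      (1 / (a : ℂ)) * ∑ t ∈ a.divisors, RS G t (a * x) * mu (a / t))
      atTop (nhds ((1 / (a : ℂ)) * ∑ t ∈ a.divisors, R t * mu (a / t))) := by
    refine Tendsto.const_mul _ (tendsto_finsetSum _ fun t ht => ?_)
    exact ((hR t ht).comp (tendsto_id.const_mul_atTop haR)).mul_const _
  refine hsum.congr fun x => ?_
  rw [← LS_div_eq_sum_divisors_RS_mul_mu G ha, mul_div_cancel_left₀ x haR.ne']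

theorem RConv.tendsto_limUnder {G : ℕ → ℂ} {a : ℕ} (h : RConv G a) :
    RTendsto G a (limUnder atTop (RS G a)) :=
  tendsto_nhds_limUnder h

theorem LConv.tendsto_limUnder {G : ℕ → ℂ} {d : ℕ} (h : LConv G d) :
    LTendsto G d (limUnder atTop (LS G d)) :=
  tendsto_nhds_limUnder h

/-- The `LR` formula (Corollary 3.7): `G` is a Ramanujan coefficient iff it is a
Lucht coefficient. -/
theorem stmt_16 (G : ℕ → ℂ) :
    (∀ a : ℕ, 0 < a → ∀ x : ℝ, 0 ≤ x →
      RS G a x = ∑ d ∈ a.divisors, (d : ℂ) * LS G d (x / d)) ∧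
    (∀ a : ℕ, 0 < a → ∀ x : ℝ, 0 ≤ x →
      LS G a (x / a) = (1 / (a : ℂ)) * ∑ t ∈ a.divisors, RS G t x * mu (a / t)) ∧
    (∀ a : ℕ, 0 < a → ∀ L : ℕ → ℂ, (∀ d ∈ a.divisors, LTendsto G d (L d)) →
      RTendsto G a (∑ d ∈ a.divisors, (d : ℂ) * L d)) ∧
    (∀ a : ℕ, 0 < a → ∀ R : ℕ → ℂ, (∀ t ∈ a.divisors, RTendsto G t (R t)) →
      LTendsto G a ((1 / (a : ℂ)) * ∑ t ∈ a.divisors, R t * mu (a / t))) ∧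
    ((∀ a : ℕ, 0 < a → RConv G a) ↔ (∀ a : ℕ, 0 < a → LConv G a)) := by
  refine ⟨fun a ha x _ => RS_eq_sum_divisors_mul_LS G ha.ne' x,
    fun a ha x _ => LS_div_eq_sum_divisors_RS_mul_mu G ha x,
    fun a ha => RTendsto_sum_divisors_mul G ha, fun a ha => LTendsto_sum_divisors_mul_mu G ha,
    fun hR a ha => ?_, fun hL a ha => ?_⟩
  · exact ⟨_, LTendsto_sum_divisors_mul_mu G ha _ fun t ht =>
      (hR t (Nat.pos_of_mem_divisors ht)).tendsto_limUnder⟩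
  · exact ⟨_, RTendsto_sum_divisors_mul G ha _ fun d hd =>
      (hL d (Nat.pos_of_mem_divisors hd)).tendsto_limUnder⟩
end

section
/- Let G : ℕ → ℂ be multiplicative and suppose that the coprime series S_G(b) converges for some b ∈ ℕ. Let c ∈ ℕ be coprime with b and such that no prime divisor of c is bad for G, i.e. every prime p ∣ c satisfies |G(p)| < 1 or |G(p)| > p. Then S_G(bc) converges and S_G(bc) = ( ∏_{p ∣ c} (1 − G(p))^{-1} ) · S_G(b). -/
open Filter Finset

/-!
For a prime `p ∤ a` write `F n = S_G(ap, n)` and `H n = S_G(a, n)`. Sorting the `r ≤ n` coprime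
to `a` by whether `p ∣ r`, and using `G(pr) μ(pr) = -G(p) G(r) μ(r)` for `p ∤ r`, gives the
recurrence `F n = H n + G(p) F ⌊n/p⌋`. If `|G(p)| < 1`, unrolling it downwards gives
`F n = ∑_{j ≥ 0} G(p)^j H ⌊n/p^j⌋`; if `|G(p)| > p`, unrolling it upwards and using `F m = O(m)`
gives `F n = -∑_{j ≥ 1} G(p)^{-j} H (p^j n)`. Either way dominated convergence turns `H → L`
into `F → L / (1 - G(p))`. Since `S_G(a)` depends only on the prime factors of `a`, the primes
of `c` can then be adjoined to `b` one at a time.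
-/

open Topology

section Recurrence

variable {𝕜 : Type*} [NormedField 𝕜]

theorem tendsto_tsum_mul_comp [CompleteSpace 𝕜] {c : ℕ → 𝕜} (hc : Summable fun j => ‖c j‖)
    {φ : ℕ → ℕ → ℕ} (hφ : ∀ j, Tendsto (φ j) atTop atTop)
    {H : ℕ → 𝕜} {L : 𝕜} (hH : Tendsto H atTop (𝓝 L)) :
    Tendsto (fun n => ∑' j, c j * H (φ j n)) atTop (𝓝 ((∑' j, c j) * L)) := by
  obtain ⟨M, hM⟩ := hH.norm.bddAbove_range
  rw [← tsum_mul_right]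
  refine tendsto_tsum_of_dominated_convergence (bound := fun j => ‖c j‖ * M) (hc.mul_right M)
    (fun j => (hH.comp (hφ j)).const_mul (c j)) (Eventually.of_forall fun n j => ?_)
  rw [norm_mul]
  gcongr
  exact hM ⟨_, rfl⟩

variable {F H : ℕ → 𝕜} {γ : 𝕜} {p : ℕ}

theorem eq_sum_add_of_rec_div (hrec : ∀ n, F n = H n + γ * F (n / p)) (k n : ℕ) :
    F n = ∑ j ∈ range k, γ ^ j * H (n / p ^ j) + γ ^ k * F (n / p ^ k) := by
  induction k with
  | zero => simp
  | succ k ih =>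
    rw [ih, hrec (n / p ^ k), sum_range_succ, Nat.div_div_eq_div_mul, ← pow_succ]
    ring

theorem hasSum_of_rec_div (hγ : ‖γ‖ < 1) (hrec : ∀ n, F n = H n + γ * F (n / p)) (n : ℕ) :
    HasSum (fun j => γ ^ j * H (n / p ^ j)) (F n) := by
  obtain ⟨MH, hMH⟩ := ((Set.finite_Iic n).image fun m => ‖H m‖).bddAbove
  obtain ⟨MF, hMF⟩ := ((Set.finite_Iic n).image fun m => ‖F m‖).bddAbove
  have hle (j : ℕ) : n / p ^ j ∈ Set.Iic n := Nat.div_le_self n _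
  have hgeom := tendsto_pow_atTop_nhds_zero_of_lt_one (norm_nonneg γ) hγ
  have hsum : Summable fun j => ‖γ ^ j * H (n / p ^ j)‖ := by
    refine .of_nonneg_of_le (fun _ => norm_nonneg _) (fun j => ?_)
      ((summable_geometric_of_lt_one (norm_nonneg γ) hγ).mul_right MH)
    rw [norm_mul, norm_pow]
    gcongr
    exact hMH ⟨_, hle j, rfl⟩
  have hrem : Tendsto (fun k => γ ^ k * F (n / p ^ k)) atTop (𝓝 0) := by
    refine squeeze_zero_norm (fun k => ?_) (by simpa using hgeom.mul_const MF)
    rw [norm_mul, norm_pow]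
    gcongr
    exact hMF ⟨_, hle k, rfl⟩
  have hpartial (k : ℕ) :
      ∑ j ∈ range k, γ ^ j * H (n / p ^ j) = F n - γ ^ k * F (n / p ^ k) := by
    rw [eq_sum_add_of_rec_div hrec k n, add_sub_cancel_right]
  rw [hasSum_iff_tendsto_nat_of_summable_norm hsum]
  simp only [hpartial]
  simpa using tendsto_const_nhds.sub hrem

theorem tendsto_of_rec_div_of_norm_lt_one [CompleteSpace 𝕜] (hp : 0 < p) (hγ : ‖γ‖ < 1)
    (hrec : ∀ n, F n = H n + γ * F (n / p)) {L : 𝕜} (hH : Tendsto H atTop (𝓝 L)) :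
    Tendsto F atTop (𝓝 ((1 - γ)⁻¹ * L)) := by
  have hF : F = fun n => ∑' j, γ ^ j * H (n / p ^ j) :=
    funext fun n => (hasSum_of_rec_div hγ hrec n).tsum_eq.symm
  rw [hF, ← tsum_geometric_of_norm_lt_one hγ]
  refine tendsto_tsum_mul_comp ?_ (fun j => Nat.tendsto_div_const_atTop (pow_pos hp j).ne') hH
  simpa using summable_geometric_of_lt_one (norm_nonneg γ) hγ

theorem eq_sub_sum_of_rec_div (hp : 0 < p) (hγ : γ ≠ 0) (hrec : ∀ n, F n = H n + γ * F (n / p))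
    (k n : ℕ) :
    F n = γ⁻¹ ^ k * F (p ^ k * n) - ∑ j ∈ range k, γ⁻¹ ^ (j + 1) * H (p ^ (j + 1) * n) := by
  induction k with
  | zero => simp
  | succ k ih =>
    have hstep := hrec (p ^ (k + 1) * n)
    rw [pow_succ', mul_assoc, Nat.mul_div_cancel_left _ hp, ← mul_assoc, ← pow_succ'] at hstep
    have hcancel : γ⁻¹ ^ (k + 1) * γ = γ⁻¹ ^ k := by
      rw [pow_succ, mul_assoc, inv_mul_cancel₀ hγ, mul_one]
    rw [ih, sum_range_succ, hstep]
    linear_combination (-F (p ^ k * n)) * hcancel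

theorem hasSum_of_rec_div_of_lt_norm (hp : 0 < p) (hγ : (p : ℝ) < ‖γ‖)
    (hrec : ∀ n, F n = H n + γ * F (n / p)) {A M : ℝ} (hF : ∀ m, ‖F m‖ ≤ A * m)
    (hH : ∀ m, ‖H m‖ ≤ M) (n : ℕ) :
    HasSum (fun j => -γ⁻¹ ^ (j + 1) * H (p ^ (j + 1) * n)) (F n) := by
  have hγ1 : 1 < ‖γ‖ := lt_of_le_of_lt (by exact_mod_cast hp) hγ
  have hγ0 : γ ≠ 0 := norm_pos_iff.mp (one_pos.trans hγ1)
  have hβ : ‖γ‖⁻¹ < 1 := inv_lt_one_of_one_lt₀ hγ1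
  have hpβ : p * ‖γ‖⁻¹ < 1 := by
    rw [mul_inv_lt_iff₀ (one_pos.trans hγ1), one_mul]; exact hγ
  have hsum : Summable fun j => ‖-γ⁻¹ ^ (j + 1) * H (p ^ (j + 1) * n)‖ := by
    refine .of_nonneg_of_le (fun _ => norm_nonneg _) (fun j => ?_)
      (((summable_nat_add_iff 1).mpr (summable_geometric_of_lt_one (by positivity) hβ)).mul_right M)
    rw [norm_mul, norm_neg, norm_pow, norm_inv]
    gcongr
    exact hH _
  have hrem : Tendsto (fun k => γ⁻¹ ^ k * F (p ^ k * n)) atTop (𝓝 0) := by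
    refine squeeze_zero_norm (fun k => ?_) (by simpa using ((tendsto_pow_atTop_nhds_zero_of_lt_one
      (by positivity) hpβ).const_mul (A * n)))
    rw [norm_mul, norm_pow, norm_inv]
    calc ‖γ‖⁻¹ ^ k * ‖F (p ^ k * n)‖ ≤ ‖γ‖⁻¹ ^ k * (A * ↑(p ^ k * n)) := by gcongr; exact hF _
      _ = A * n * (p * ‖γ‖⁻¹) ^ k := by push_cast; ring
  have hpartial (k : ℕ) : ∑ j ∈ range k, -γ⁻¹ ^ (j + 1) * H (p ^ (j + 1) * n) =
      F n - γ⁻¹ ^ k * F (p ^ k * n) := by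
    rw [eq_sub_sum_of_rec_div hp hγ0 hrec k n]
    simp only [neg_mul, sum_neg_distrib]
    ring
  rw [hasSum_iff_tendsto_nat_of_summable_norm hsum]
  simp only [hpartial]
  simpa using tendsto_const_nhds.sub hrem

theorem tendsto_of_rec_div_of_lt_norm [CompleteSpace 𝕜] (hp : 0 < p) (hγ : (p : ℝ) < ‖γ‖)
    (hrec : ∀ n, F n = H n + γ * F (n / p)) {A : ℝ} (hF : ∀ m, ‖F m‖ ≤ A * m)
    {L : 𝕜} (hH : Tendsto H atTop (𝓝 L)) :
    Tendsto F atTop (𝓝 ((1 - γ)⁻¹ * L)) := by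
  have hγ1 : 1 < ‖γ‖ := lt_of_le_of_lt (by exact_mod_cast hp) hγ
  have hγ0 : γ ≠ 0 := norm_pos_iff.mp (one_pos.trans hγ1)
  have hβ : ‖γ⁻¹‖ < 1 := by rw [norm_inv]; exact inv_lt_one_of_one_lt₀ hγ1
  obtain ⟨M, hM⟩ := hH.norm.bddAbove_range
  have hFsum : F = fun n => ∑' j, -γ⁻¹ ^ (j + 1) * H (p ^ (j + 1) * n) :=
    funext fun n =>
      (hasSum_of_rec_div_of_lt_norm hp hγ hrec hF (fun m => hM ⟨m, rfl⟩) n).tsum_eq.symm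
  have hc : ∑' j, -γ⁻¹ ^ (j + 1) = (1 - γ)⁻¹ := by
    simp only [pow_succ', tsum_neg, tsum_mul_left, tsum_geometric_of_norm_lt_one hβ]
    field_simp
    rw [← neg_sub 1 γ, div_neg, neg_neg]
  rw [hFsum, ← hc]
  refine tendsto_tsum_mul_comp ?_ (fun j => tendsto_id.const_mul_atTop' (pow_pos hp _)) hH
  simpa [pow_succ'] using ((summable_geometric_of_lt_one (norm_nonneg _) hβ).mul_left ‖γ⁻¹‖)

end Recurrence

theorem Finset.sum_Icc_filter_dvd_s19 {M : Type*} [AddCommMonoid M] (f : ℕ → M) {p : ℕ} (hp : 0 < p)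
    (n : ℕ) : ∑ r ∈ Icc 1 n with p ∣ r, f r = ∑ s ∈ Icc 1 (n / p), f (p * s) := by
  have himage : {r ∈ Icc 1 n | p ∣ r} = (Icc 1 (n / p)).image (p * ·) := by
    ext r
    simp only [mem_filter, mem_Icc, mem_image]
    constructor
    · rintro ⟨⟨h1, h2⟩, s, rfl⟩
      exact ⟨s, ⟨Nat.pos_of_mul_pos_left h1, (Nat.le_div_iff_mul_le hp).mpr (by linarith)⟩, rfl⟩
    · rintro ⟨s, ⟨h1, h2⟩, rfl⟩
      exact ⟨⟨Nat.one_le_iff_ne_zero.mpr (by positivity),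
        by linarith [(Nat.le_div_iff_mul_le hp).mp h2]⟩, dvd_mul_right p s⟩
  rw [himage, sum_image fun x _ y _ h => Nat.eq_of_mul_eq_mul_left hp h]

theorem mu_prime_mul_of_not_dvd {p s : ℕ} (hp : p.Prime) (hps : ¬ p ∣ s) :
    mu (p * s) = -mu s := by
  simp [mu, ArithmeticFunction.isMultiplicative_moebius.map_mul_of_coprime
    ((Nat.Prime.coprime_iff_not_dvd hp).mpr hps), ArithmeticFunction.moebius_apply_prime hp]

theorem mu_prime_mul_of_dvd {p s : ℕ} (hp : p.Prime) (hps : p ∣ s) : mu (p * s) = 0 := by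
  have : ¬ Squarefree (p * s) := fun h =>
    hp.not_isUnit (h p (mul_dvd_mul_left p hps))
  simp [mu, ArithmeticFunction.moebius_eq_zero_of_not_squarefree this]

noncomputable def coprimeSum (G : ℕ → ℂ) (a n : ℕ) : ℂ :=
  ∑ r ∈ (Finset.Icc 1 n).filter fun r => Nat.gcd r a = 1, G r * mu r

section coprimeSum

variable {G : ℕ → ℂ} {a : ℕ}

theorem STendsto_iff_tendsto_coprimeSum {L : ℂ} :
    STendsto G a L ↔ Tendsto (coprimeSum G a) atTop (𝓝 L) :=
  ⟨fun h => (h.comp tendsto_natCast_atTop_atTop).congr fun n => by simp [SS, coprimeSum],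
    fun h => h.comp tendsto_nat_floor_atTop⟩

theorem coprimeSum_succ (n : ℕ) : coprimeSum G a (n + 1) =
    coprimeSum G a n + if Nat.gcd (n + 1) a = 1 then G (n + 1) * mu (n + 1) else 0 := by
  simp only [coprimeSum, sum_filter]
  exact sum_Icc_succ_top (by omega) _

theorem norm_mul_mu_le_of_coprime {M : ℝ} (hM : ∀ n, ‖coprimeSum G a n‖ ≤ M) {r : ℕ}
    (hr : 0 < r) (hra : Nat.gcd r a = 1) : ‖G r * mu r‖ ≤ 2 * M := by
  obtain ⟨m, rfl⟩ := Nat.exists_eq_add_of_le' hr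
  have hterm : G (m + 1) * mu (m + 1) = coprimeSum G a (m + 1) - coprimeSum G a m := by
    rw [coprimeSum_succ, if_pos hra, add_sub_cancel_left]
  rw [hterm, two_mul]
  exact (norm_sub_le _ _).trans (add_le_add (hM _) (hM _))

theorem norm_coprimeSum_le_of_dvd {M : ℝ} (hM : ∀ n, ‖coprimeSum G a n‖ ≤ M) {b : ℕ}
    (hab : a ∣ b) (n : ℕ) : ‖coprimeSum G b n‖ ≤ 2 * M * n := by
  have hM0 : 0 ≤ M := (norm_nonneg _).trans (hM 0)
  calc ‖coprimeSum G b n‖ ≤ ∑ r ∈ Icc 1 n with Nat.gcd r b = 1, 2 * M := by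
        refine norm_sum_le_of_le _ fun r hr => ?_
        simp only [mem_filter, mem_Icc] at hr
        exact norm_mul_mu_le_of_coprime hM hr.1.1 (Nat.Coprime.coprime_dvd_right hab hr.2)
    _ = #{r ∈ Icc 1 n | Nat.gcd r b = 1} • (2 * M) := sum_const _
    _ ≤ n • (2 * M) := by
        gcongr
        simpa using card_filter_le (Icc 1 n) _
    _ = 2 * M * n := by rw [nsmul_eq_mul, mul_comm]

theorem coprimeSum_mul_prime (hG : IsMult G) {p : ℕ} (hp : p.Prime) (hpa : ¬ p ∣ a) (n : ℕ) :
    coprimeSum G (a * p) n = coprimeSum G a n + G p * coprimeSum G (a * p) (n / p) := by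
  have hcop (r : ℕ) : Nat.gcd r (a * p) = 1 ↔ Nat.gcd r a = 1 ∧ ¬ p ∣ r := by
    rw [← Nat.coprime_iff_gcd_eq_one, Nat.coprime_mul_iff_right]
    exact and_congr Iff.rfl (Nat.coprime_comm.trans hp.coprime_iff_not_dvd)
  set f : ℕ → ℂ := fun r => if Nat.gcd r a = 1 then G r * mu r else 0 with hf
  have hsplit : coprimeSum G a n =
      ∑ r ∈ Icc 1 n with p ∣ r, f r + ∑ r ∈ Icc 1 n with ¬ p ∣ r, f r := by
    rw [sum_filter_add_sum_filter_not, coprimeSum, sum_filter]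
  have hcoprime : coprimeSum G (a * p) n = ∑ r ∈ Icc 1 n with ¬ p ∣ r, f r := by
    rw [coprimeSum, sum_filter, sum_filter]
    refine sum_congr rfl fun r _ => ?_
    simp only [hf, hcop]
    split_ifs <;> tauto
  have hmultiple (s : ℕ) (hs : s ∈ Icc 1 (n / p)) :
      f (p * s) = -G p * if Nat.gcd s (a * p) = 1 then G s * mu s else 0 := by
    by_cases hps : p ∣ s
    · have : Nat.gcd s (a * p) ≠ 1 := by rw [Ne, hcop]; tauto
      simp [hf, this, mu_prime_mul_of_dvd hp hps]
    · have hgcd : Nat.gcd (p * s) a = 1 ↔ Nat.gcd s (a * p) = 1 := by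
        rw [hcop, ← Nat.coprime_iff_gcd_eq_one, ← Nat.coprime_iff_gcd_eq_one,
          Nat.coprime_mul_iff_left, and_iff_right (hp.coprime_iff_not_dvd.mpr hpa)]
        tauto
      simp only [hf, hgcd, hG p s hp.pos (mem_Icc.mp hs).1 (hp.coprime_iff_not_dvd.mpr hps),
        mu_prime_mul_of_not_dvd hp hps]
      split_ifs <;> ring
  have hdvd : ∑ r ∈ Icc 1 n with p ∣ r, f r = -G p * coprimeSum G (a * p) (n / p) := by
    rw [sum_Icc_filter_dvd_s19 _ hp.pos, sum_congr rfl hmultiple, ← mul_sum, coprimeSum, sum_filter]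
  rw [hsplit, hdvd, hcoprime]
  ring

end coprimeSum

section STendsto

variable {G : ℕ → ℂ}

theorem SS_eq_of_primeFactors_eq {a b : ℕ} (ha : a ≠ 0) (hb : b ≠ 0)
    (h : a.primeFactors = b.primeFactors) : SS G a = SS G b := by
  funext x
  refine sum_congr (filter_congr fun r hr => ?_) fun _ _ => rfl
  have hr0 : r ≠ 0 := Nat.one_le_iff_ne_zero.mp (mem_Icc.mp hr).1
  rw [← Nat.coprime_iff_gcd_eq_one, ← Nat.coprime_iff_gcd_eq_one,
    ← Nat.disjoint_primeFactors hr0 ha, ← Nat.disjoint_primeFactors hr0 hb, h]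

theorem STendsto.mul_prime (hG : IsMult G) {a p : ℕ} (hp : p.Prime) (hpa : ¬ p ∣ a)
    (hgood : ‖G p‖ < 1 ∨ (p : ℝ) < ‖G p‖) {L : ℂ} (hL : STendsto G a L) :
    STendsto G (a * p) ((1 - G p)⁻¹ * L) := by
  rw [STendsto_iff_tendsto_coprimeSum] at hL ⊢
  have hrec := coprimeSum_mul_prime hG hp hpa
  rcases hgood with hsmall | hlarge
  · exact tendsto_of_rec_div_of_norm_lt_one hp.pos hsmall hrec hL
  · obtain ⟨M, hM⟩ := hL.norm.bddAbove_range
    exact tendsto_of_rec_div_of_lt_norm hp.pos hlarge hrec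
      (norm_coprimeSum_le_of_dvd (fun n => hM ⟨n, rfl⟩) (dvd_mul_right a p)) hL

theorem STendsto.mul_prod_primes (hG : IsMult G) {a : ℕ} {s : Finset ℕ} (hs : ∀ p ∈ s, p.Prime)
    (hsa : ∀ p ∈ s, ¬ p ∣ a) (hgood : ∀ p ∈ s, ‖G p‖ < 1 ∨ (p : ℝ) < ‖G p‖) {L : ℂ}
    (hL : STendsto G a L) :
    STendsto G (a * ∏ p ∈ s, p) ((∏ p ∈ s, (1 - G p)⁻¹) * L) := by
  induction s using Finset.induction_on with
  | empty => simpa using hL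
  | insert q s hq ih =>
    simp only [mem_insert, forall_eq_or_imp] at hs hsa hgood
    have hqs : ¬ q ∣ a * ∏ p ∈ s, p := by
      rw [hs.1.prime.dvd_mul, hs.1.prime.dvd_finsetProd_iff]
      rintro (hqa | ⟨p, hp, hqp⟩)
      · exact hsa.1 hqa
      · exact hq ((Nat.prime_dvd_prime_iff_eq hs.1 (hs.2 p hp)).mp hqp ▸ hp)
    have hstep := (ih hs.2 hsa.2 hgood.2).mul_prime hG hs.1 hqs hgood.1
    rwa [prod_insert hq, prod_insert hq, mul_assoc, mul_comm q, ← mul_assoc]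

end STendsto

/-- Converse `S_G`-recursive formula (Corollary 6.2). -/
theorem stmt_19 (G : ℕ → ℂ) (hG : IsMult G) (b c : ℕ) (hb : 0 < b) (hc : 0 < c)
    (hbc : Nat.Coprime b c) (L : ℂ) (hSb : STendsto G b L)
    (hgood : ∀ p : ℕ, p.Prime → p ∣ c →
      ‖G p‖ < 1 ∨ (p : ℝ) < ‖G p‖) :
    STendsto G (b * c) ((∏ p ∈ c.primeFactors, (1 - G p)⁻¹) * L) := by
  have hprime : ∀ p ∈ c.primeFactors, p.Prime := fun p hp => Nat.prime_of_mem_primeFactors hp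
  have hdvd : ∀ p ∈ c.primeFactors, p ∣ c := fun p hp => Nat.dvd_of_mem_primeFactors hp
  have hrad0 : ∏ p ∈ c.primeFactors, p ≠ 0 := prod_ne_zero_iff.mpr fun p hp => (hprime p hp).ne_zero
  have hrad : (b * c).primeFactors = (b * ∏ p ∈ c.primeFactors, p).primeFactors := by
    rw [Nat.primeFactors_mul hb.ne' hc.ne', Nat.primeFactors_mul hb.ne' hrad0,
      Nat.primeFactors_prod hprime]
  rw [STendsto,
    SS_eq_of_primeFactors_eq (mul_ne_zero hb.ne' hc.ne') (mul_ne_zero hb.ne' hrad0) hrad]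
  refine hSb.mul_prod_primes hG hprime (fun p hp hpb => (hprime p hp).ne_one ?_)
    fun p hp => hgood p (hprime p hp) (hdvd p hp)
  exact Nat.Coprime.eq_one_of_dvd (Nat.Coprime.coprime_dvd_left hpb hbc) (hdvd p hp)
end
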